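/- arXiv:1909.11322 — 2 statements merged into one kernel-verified Lean document; each statement's English description precedes it below -/
import Mathlib

section
/- Let S, S₁, S₂, …, Sₙ be i.i.d. real random variables with common distribution symmetric about 0 and continuous CDF F, and set X_i = S + S_i. Then for n even, E[sgn(X₁)sgn(X₂)⋯sgn(Xₙ)] = E[(2F(S) − 1)ⁿ] = ∫₀¹ (2x − 1)ⁿ dx = 1/(n+1). -/
open MeasureTheory ProbabilityTheory Real

section Aux

open Set Filter Topology

lemma sign_eq_ind (r : ℝ) : Real.sign r =
    (Set.Ioi (0:ℝ)).indicator (fun _ => (1:ℝ)) r - (Set.Iio 0).indicator (fun _ => (1:ℝ)) r := by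
  rcases lt_trichotomy r 0 with h | h | h
  · simp [Real.sign_of_neg h, Set.indicator_apply, h, not_lt.2 h.le, asymm h]
  · simp [h, Real.sign_zero]
  · simp [Real.sign_of_pos h, Set.indicator_apply, h, not_lt.2 h.le, asymm h]

lemma measurable_rsign : Measurable Real.sign := by
  have : Real.sign = fun r => (Set.Ioi (0:ℝ)).indicator (fun _ => (1:ℝ)) r
      - (Set.Iio 0).indicator (fun _ => (1:ℝ)) r := funext sign_eq_ind
  rw [this]
  exact ((measurable_const.indicator measurableSet_Ioi).sub
    (measurable_const.indicator measurableSet_Iio))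

lemma abs_rsign_le (r : ℝ) : |Real.sign r| ≤ 1 := by
  rcases Real.sign_apply_eq r with h | h | h <;> rw [h] <;> norm_num

lemma map_eq_pi {Ω : Type*} [MeasurableSpace Ω] (μ : Measure Ω) [IsProbabilityMeasure μ]
    {ι : Type*} [Fintype ι] (f : ι → Ω → ℝ) (hmeas : ∀ i, Measurable (f i))
    (hindep : iIndepFun f μ) :
    Measure.map (fun ω i => f i ω) μ = Measure.pi (fun i => Measure.map (f i) μ) := by
  have hjm : Measurable (fun ω i => f i ω) := measurable_pi_lambda _ hmeas
  haveI : ∀ i, IsProbabilityMeasure (Measure.map (f i) μ) :=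
    fun i => Measure.isProbabilityMeasure_map (hmeas i).aemeasurable
  refine (Measure.pi_eq (μ := fun i => Measure.map (f i) μ) fun s hs => ?_).symm
  rw [Measure.map_apply hjm (MeasurableSet.univ_pi hs)]
  have hpre : (fun ω i => f i ω) ⁻¹' (Set.univ.pi s) = ⋂ i, f i ⁻¹' s i := by
    ext ω; simp [Set.mem_pi]
  rw [hpre]
  have := (iIndepFun_iff_measure_inter_preimage_eq_mul.mp hindep) Finset.univ
    (fun i _ => hs i)
  simpa [Measure.map_apply (hmeas _) (hs _)] using this

lemma pi_integral_pow {E : Type*} [MeasurableSpace E] (ν : Measure E) [IsProbabilityMeasure ν]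
    (m : ℕ) (g : E → ℝ) :
    ∫ x : Fin m → E, ∏ i, g (x i) ∂(Measure.pi fun _ => ν) = (∫ x, g x ∂ν) ^ m := by
  letI : MeasureSpace E := ⟨ν⟩
  simpa using MeasureTheory.integral_fintype_prod_eq_pow (ι := Fin m) (μ := ν) g

variable {ν : Measure ℝ} [IsProbabilityMeasure ν] {G : ℝ → ℝ}

lemma cdf_singleton (hG : ∀ x, G x = (ν (Iic x)).toReal) (hGc : Continuous G) (a : ℝ) :
    ν {a} = 0 := by
  have key : ∀ x, x < a → (ν {a}).toReal ≤ G a - G x := by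
    intro x hx
    have h1 : ν {a} ≤ ν (Ioc x a) := measure_mono (by simp [hx])
    have h2 : (ν (Ioc x a)).toReal = G a - G x := by
      have : Iic a \ Iic x = Ioc x a := Iic_sdiff_Iic
      rw [hG, hG, ← this, measure_diff (Iic_subset_Iic.2 hx.le) nullMeasurableSet_Iic
        (measure_ne_top ν _), ENNReal.toReal_sub_of_le (measure_mono (Iic_subset_Iic.2 hx.le))
        (measure_ne_top ν _)]
    calc (ν {a}).toReal ≤ (ν (Ioc x a)).toReal :=
          ENNReal.toReal_mono (measure_ne_top ν _) h1
      _ = G a - G x := h2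
  have hlim : Tendsto (fun x => G a - G x) (𝓝[<] a) (𝓝 0) := by
    have h : Tendsto (fun x => G a - G x) (𝓝[<] a) (𝓝 (G a - G a)) :=
      ((hGc.tendsto a).const_sub (G a)).mono_left nhdsWithin_le_nhds
    simpa using h
  have hle : (ν {a}).toReal ≤ 0 :=
    ge_of_tendsto hlim (eventually_nhdsWithin_of_forall fun x hx => key x hx)
  have : (ν {a}).toReal = 0 := le_antisymm hle ENNReal.toReal_nonneg
  exact (ENNReal.toReal_eq_zero_iff _).mp this |>.resolve_right (measure_ne_top ν _)

lemma cdf_Iio (hG : ∀ x, G x = (ν (Iic x)).toReal) (hGc : Continuous G) (a : ℝ) :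
    (ν (Iio a)).toReal = G a := by
  have hu : Iio a ∪ {a} = Iic a := by ext t; simp [le_iff_lt_or_eq]
  have : ν (Iic a) = ν (Iio a) := by
    rw [← hu]
    refine le_antisymm ((measure_union_le _ _).trans ?_) (measure_mono subset_union_left)
    rw [cdf_singleton hG hGc a]; simp
  rw [← this, hG]

lemma cdf_Ioi (hG : ∀ x, G x = (ν (Iic x)).toReal) (a : ℝ) :
    (ν (Ioi a)).toReal = 1 - G a := by
  have := measure_add_measure_compl (μ := ν) (measurableSet_Iic (a := a))
  rw [compl_Iic] at this
  have h1 : (ν (Iic a)).toReal + (ν (Ioi a)).toReal = 1 := by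
    rw [← ENNReal.toReal_add (measure_ne_top ν _) (measure_ne_top ν _), this]
    simp
  rw [hG]; linarith

lemma cdf_neg (hG : ∀ x, G x = (ν (Iic x)).toReal) (hGc : Continuous G)
    (hsym : ν = Measure.map Neg.neg ν) (x : ℝ) : G (-x) = 1 - G x := by
  have h1 : ν (Iic (-x)) = ν (Ici x) := by
    conv_lhs => rw [hsym]
    rw [Measure.map_apply measurable_neg measurableSet_Iic]
    congr 1
    ext t; simp
  have h2 : ν (Ici x) = ν (Ioi x) := by
    have : Ici x = Ioi x ∪ {x} := by
      ext t; simp [le_iff_lt_or_eq, eq_comm, or_comm]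
    rw [this]
    refine le_antisymm ((measure_union_le _ _).trans ?_) (measure_mono subset_union_left)
    rw [cdf_singleton hG hGc x]; simp
  rw [hG, h1, h2, cdf_Ioi hG]

lemma sign_integral (hG : ∀ x, G x = (ν (Iic x)).toReal) (hGc : Continuous G)
    (hsym : ν = Measure.map Neg.neg ν) (s : ℝ) :
    ∫ t, Real.sign (s + t) ∂ν = 2 * G s - 1 := by
  have heq : (fun t => Real.sign (s + t)) = fun t =>
      (Set.Ioi (-s)).indicator (fun _ => (1:ℝ)) t - (Set.Iio (-s)).indicator (fun _ => (1:ℝ)) t := by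
    funext t
    rw [sign_eq_ind]
    congr 1
    · by_cases h : t ∈ Set.Ioi (-s)
      · rw [Set.indicator_of_mem h, Set.indicator_of_mem (by simp at h ⊢; linarith)]
      · rw [Set.indicator_of_notMem h, Set.indicator_of_notMem (by simp at h ⊢; linarith)]
    · by_cases h : t ∈ Set.Iio (-s)
      · rw [Set.indicator_of_mem h, Set.indicator_of_mem (by simp at h ⊢; linarith)]
      · rw [Set.indicator_of_notMem h, Set.indicator_of_notMem (by simp at h ⊢; linarith)]
  rw [heq, integral_sub ((integrable_const (1:ℝ)).indicator measurableSet_Ioi)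
    ((integrable_const (1:ℝ)).indicator measurableSet_Iio),
    integral_indicator_const _ measurableSet_Ioi, integral_indicator_const _ measurableSet_Iio,
    smul_eq_mul, smul_eq_mul, mul_one, mul_one, measureReal_def, measureReal_def, cdf_Ioi hG, cdf_Iio hG hGc,
    cdf_neg hG hGc hsym]
  ring

lemma map_cdf_eq_uniform (hG : ∀ x, G x = (ν (Iic x)).toReal) (hGc : Continuous G) :
    Measure.map G ν = (volume : Measure ℝ).restrict (Ioc 0 1) := by
  have hGeq : G = ProbabilityTheory.cdf ν := funext fun x => by rw [hG, cdf_eq_real, measureReal_def]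
  have hmono : Monotone G := hGeq ▸ monotone_cdf ν
  have h0 : ∀ x, 0 ≤ G x := fun x => hGeq ▸ cdf_nonneg ν x
  have h1 : ∀ x, G x ≤ 1 := fun x => hGeq ▸ cdf_le_one ν x
  have htop : Tendsto G atTop (𝓝 1) := hGeq ▸ tendsto_cdf_atTop ν
  have hbot : Tendsto G atBot (𝓝 0) := hGeq ▸ tendsto_cdf_atBot ν
  have hGm : Measurable G := hGc.measurable
  haveI : IsProbabilityMeasure (Measure.map G ν) := Measure.isProbabilityMeasure_map hGm.aemeasurable
  refine Measure.ext_of_Iic _ _ fun t => ?_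
  rw [Measure.map_apply hGm measurableSet_Iic, Measure.restrict_apply measurableSet_Iic]
  rcases lt_or_ge t 0 with ht | ht
  · have he : G ⁻¹' Iic t = ∅ := by
      ext x; simp only [mem_preimage, mem_Iic, mem_empty_iff_false, iff_false, not_le]
      exact lt_of_lt_of_le ht (h0 x)
    have he2 : Iic t ∩ Ioc (0:ℝ) 1 = ∅ := by
      ext x; simp only [mem_inter_iff, mem_Iic, mem_Ioc, mem_empty_iff_false, iff_false]
      rintro ⟨h1', h2', _⟩; linarith
    rw [he, he2]; simp
  rcases le_or_gt 1 t with ht1 | ht1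
  · have he : G ⁻¹' Iic t = univ := by
      ext x; simp only [mem_preimage, mem_Iic, mem_univ, iff_true]
      exact (h1 x).trans ht1
    have he2 : Iic t ∩ Ioc (0:ℝ) 1 = Ioc 0 1 := by
      rw [inter_eq_right]; intro x hx; exact hx.2.trans ht1
    rw [he, he2]
    simp [Real.volume_Ioc]
  · have he2 : Iic t ∩ Ioc (0:ℝ) 1 = Ioc 0 t := by
      ext x; simp only [mem_inter_iff, mem_Iic, mem_Ioc]
      constructor
      · rintro ⟨ha, hb, _⟩; exact ⟨hb, ha⟩
      · rintro ⟨ha, hb⟩; exact ⟨hb, ha, hb.trans ht1.le⟩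
    rw [he2, Real.volume_Ioc]
    have key : ν (G ⁻¹' Iic t) = ENNReal.ofReal t := by
      by_cases hne : (G ⁻¹' Iic t).Nonempty
      · have hbdd : BddAbove (G ⁻¹' Iic t) := by
          obtain ⟨b, hb⟩ := (htop.eventually (eventually_gt_nhds ht1)).exists_forall_of_atTop
          exact ⟨b, fun x hx => by
            by_contra hc
            exact absurd (hb x (not_le.mp hc).le) (not_lt.mpr hx)⟩
        set a := sSup (G ⁻¹' Iic t) with ha
        have hclosed : IsClosed (G ⁻¹' Iic t) := isClosed_Iic.preimage hGc
        have hmem : a ∈ G ⁻¹' Iic t := hclosed.csSup_mem hne hbdd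
        have hAeq : G ⁻¹' Iic t = Iic a := by
          apply Subset.antisymm
          · exact fun x hx => le_csSup hbdd hx
          · exact fun x hx => le_trans (hmono hx) hmem
        have hGa : G a = t := by
          refine le_antisymm hmem ?_
          have : ∀ x, a < x → t ≤ G x := by
            intro x hx
            by_contra hc
            have : x ∈ G ⁻¹' Iic t := le_of_lt (not_le.mp hc)
            exact absurd (le_csSup hbdd this) (not_le.mpr hx)
          refine ge_of_tendsto ((hGc.tendsto a).mono_left (nhdsWithin_le_nhds (s := Ioi a))) ?_
          exact eventually_nhdsWithin_of_forall fun x hx => this x hx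
        rw [hAeq]
        have : (ν (Iic a)).toReal = t := by rw [← hG, hGa]
        rw [← this, ENNReal.ofReal_toReal (measure_ne_top ν _)]
      · rw [not_nonempty_iff_eq_empty.mp hne]
        have ht0 : t ≤ 0 := by
          by_contra hc
          obtain ⟨b, hb⟩ := (hbot.eventually (eventually_lt_nhds (not_le.mp hc))).exists
          exact hne ⟨b, le_of_lt hb⟩
        have : t = 0 := le_antisymm ht0 ht
        simp [this]
    rw [key]; norm_num

lemma part3 (n : ℕ) (hn : Even n) :
    ∫ x in (0:ℝ)..1, (2 * x - 1) ^ n = 1 / (n + 1 : ℝ) := by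
  have hder : ∀ x : ℝ, HasDerivAt (fun y => (2 * y - 1) ^ (n + 1) / (2 * ((n:ℝ) + 1)))
      ((2 * x - 1) ^ n) x := by
    intro x
    have h1 : HasDerivAt (fun y : ℝ => 2 * y - 1) 2 x := by
      simpa using ((hasDerivAt_id x).const_mul 2).sub_const 1
    have h2 : HasDerivAt (fun y : ℝ => (2 * y - 1) ^ (n + 1))
        (((n : ℝ) + 1) * (2 * x - 1) ^ n * 2) x := by
      have := (hasDerivAt_pow (n + 1) (2 * x - 1)).comp x h1
      simpa [Function.comp_def, Nat.cast_add, mul_comm, mul_assoc] using this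
    have h3 := h2.div_const (2 * ((n:ℝ) + 1))
    refine h3.congr_deriv ?_
    rw [div_eq_iff (by positivity)]
    ring
  have hcont : Continuous fun x : ℝ => (2 * x - 1) ^ n := by continuity
  rw [intervalIntegral.integral_eq_sub_of_hasDerivAt (fun x _ => hder x)
    (hcont.intervalIntegrable 0 1)]
  have hodd : Odd (n + 1) := Even.add_one hn
  have : ((-1 : ℝ)) ^ (n + 1) = -1 := hodd.neg_one_pow
  norm_num [this]
  field_simp
  ring

end Aux

/-- For i.i.d. symmetric `S, S₁, …, Sₙ` with continuous common CDF `F`,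
`Xᵢ = S + Sᵢ`, and `n` even:
`E[∏ sgn(Xᵢ)] = E[(2F(S) − 1)ⁿ] = ∫₀¹ (2x − 1)ⁿ dx = 1/(n+1)`. -/
theorem sign_product_moments
    {Ω : Type*} [MeasurableSpace Ω] (μ : Measure Ω) [IsProbabilityMeasure μ]
    (n : ℕ) (hn : Even n)
    (f : Fin (n + 1) → Ω → ℝ) (hmeas : ∀ i, Measurable (f i))
    (hindep : iIndepFun f μ)
    (hident : ∀ i, Measure.map (f i) μ = Measure.map (f 0) μ)
    (hsymm : Measure.map (f 0) μ = Measure.map (fun ω => -f 0 ω) μ)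
    (F : ℝ → ℝ) (hF : ∀ x, F x = (μ {ω | f 0 ω ≤ x}).toReal)
    (hFcont : Continuous F) :
    (∫ ω, ∏ i : Fin n, Real.sign (f 0 ω + f i.succ ω) ∂μ
        = ∫ ω, (2 * F (f 0 ω) - 1) ^ n ∂μ) ∧
    (∫ ω, (2 * F (f 0 ω) - 1) ^ n ∂μ = ∫ x in (0:ℝ)..1, (2 * x - 1) ^ n) ∧
    (∫ x in (0:ℝ)..1, (2 * x - 1) ^ n = 1 / (n + 1 : ℝ)) := by
  set ν : Measure ℝ := Measure.map (f 0) μ with hν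
  haveI : IsProbabilityMeasure ν := Measure.isProbabilityMeasure_map (hmeas 0).aemeasurable
  have hF' : ∀ x, F x = (ν (Set.Iic x)).toReal := by
    intro x
    rw [hF, hν, Measure.map_apply (hmeas 0) measurableSet_Iic]
    rfl
  have hsym' : ν = Measure.map Neg.neg ν := by
    rw [hν, Measure.map_map measurable_neg (hmeas 0)]
    exact hsymm
  -- the common pieces
  have hFm : Measurable F := hFcont.measurable
  have hcontn : Continuous fun s : ℝ => (2 * F s - 1) ^ n :=
    ((continuous_const.mul hFcont).sub continuous_const).pow n
  have hE : ∫ ω, (2 * F (f 0 ω) - 1) ^ n ∂μ = ∫ s, (2 * F s - 1) ^ n ∂ν := by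
    rw [hν, integral_map (hmeas 0).aemeasurable hcontn.aestronglyMeasurable]
  refine ⟨?_, ?_, part3 n hn⟩
  · -- Part 1
    have hjm : Measurable (fun ω i => f i ω) := measurable_pi_lambda _ hmeas
    have hΦm : Measurable (fun x : Fin (n+1) → ℝ => ∏ i : Fin n, Real.sign (x 0 + x i.succ)) :=
      Finset.measurable_prod _ fun i _ =>
        measurable_rsign.comp ((measurable_pi_apply 0).add (measurable_pi_apply i.succ))
    have hmap : Measure.map (fun ω i => f i ω) μ = Measure.pi (fun _ : Fin (n+1) => ν) := by
      rw [map_eq_pi μ f hmeas hindep]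
      congr 1
      funext i
      rw [hident i]
    have step1 : ∫ ω, ∏ i : Fin n, Real.sign (f 0 ω + f i.succ ω) ∂μ
        = ∫ x : Fin (n+1) → ℝ, ∏ i : Fin n, Real.sign (x 0 + x i.succ)
            ∂(Measure.pi fun _ => ν) := by
      rw [← hmap, integral_map hjm.aemeasurable hΦm.aestronglyMeasurable]
    -- split off coordinate 0
    have hmp := measurePreserving_piFinSuccAbove (fun _ : Fin (n+1) => (ν : Measure ℝ)) 0
    set g : ℝ × (Fin n → ℝ) → ℝ := fun p => ∏ i : Fin n, Real.sign (p.1 + p.2 i) with hg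
    have hgm : Measurable g :=
      Finset.measurable_prod _ fun i _ =>
        measurable_rsign.comp (measurable_fst.add ((measurable_pi_apply i).comp measurable_snd))
    have step2 : ∫ x : Fin (n+1) → ℝ, ∏ i : Fin n, Real.sign (x 0 + x i.succ)
          ∂(Measure.pi fun _ => ν)
        = ∫ p, g p ∂(ν.prod (Measure.pi fun _ : Fin n => ν)) := by
      rw [← hmp.integral_comp (MeasurableEquiv.measurableEmbedding _) g]
      congr 1
    have hgint : Integrable g (ν.prod (Measure.pi fun _ : Fin n => ν)) := by
      refine (integrable_const (1:ℝ)).mono' hgm.aestronglyMeasurable (ae_of_all _ fun p => ?_)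
      rw [Real.norm_eq_abs, hg]
      calc |∏ i : Fin n, Real.sign (p.1 + p.2 i)| = ∏ i : Fin n, |Real.sign (p.1 + p.2 i)| :=
            Finset.abs_prod _ _
        _ ≤ 1 := Finset.prod_le_one (fun i _ => abs_nonneg _) (fun i _ => abs_rsign_le _)
    have step3 : ∫ p, g p ∂(ν.prod (Measure.pi fun _ : Fin n => ν))
        = ∫ s, (2 * F s - 1) ^ n ∂ν := by
      rw [integral_prod g hgint]
      refine integral_congr_ae (Filter.Eventually.of_forall fun s => ?_)
      have h := pi_integral_pow ν n (fun t => Real.sign (s + t))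
      rw [sign_integral hF' hFcont hsym' s] at h
      exact h
    rw [step1, step2, step3, hE]
  · -- Part 2
    have hφc : Continuous fun u : ℝ => (2 * u - 1) ^ n :=
      ((continuous_const.mul continuous_id).sub continuous_const).pow n
    have h2 : ∫ s, (2 * F s - 1) ^ n ∂ν = ∫ u, (2 * u - 1) ^ n ∂(Measure.map F ν) :=
      (integral_map hFm.aemeasurable hφc.aestronglyMeasurable).symm
    rw [hE, h2, map_cdf_eq_uniform hF' hFcont,
      intervalIntegral.integral_of_le (zero_le_one' ℝ)]
end

section
/- Let a_n (n ≥ 0) be defined by a₀ = 1, a_n = 0 for n odd, and for n ≥ 2 even, a_n (1 − 2^{−n}) = 2^{−n} Σ_{k=2,4,…,n} C(n,k) a_{n−k}. Then a_n = 1/(n+1) for all even n. -/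
private lemma even_choose_sum (m : ℕ) (hm : 1 ≤ m) :
    ∑ k ∈ Finset.range (m + 1), (if Even k then (m.choose k : ℝ) else 0) = 2 ^ (m - 1) := by
  have halt : ∑ i ∈ Finset.range (m + 1), ((-1 : ℝ)) ^ i * (m.choose i : ℝ) = 0 := by
    have := Int.alternating_sum_range_choose (n := m)
    have h2 : ((∑ i ∈ Finset.range (m + 1), (-1 : ℤ) ^ i * (m.choose i : ℤ) : ℤ) : ℝ)
        = ((if m = 0 then 1 else 0 : ℤ) : ℝ) := congrArg (Int.cast : ℤ → ℝ) this
    push_cast at h2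
    rwa [if_neg (show m ≠ 0 by omega)] at h2
  have hfull : ∑ i ∈ Finset.range (m + 1), (m.choose i : ℝ) = 2 ^ m := by
    exact_mod_cast congrArg (Nat.cast : ℕ → ℝ) (Nat.sum_range_choose m)
  have key : (2:ℝ) * ∑ k ∈ Finset.range (m + 1), (if Even k then (m.choose k : ℝ) else 0)
      = 2 ^ m := by
    rw [Finset.mul_sum]
    have : ∀ k ∈ Finset.range (m+1), 2 * (if Even k then (m.choose k : ℝ) else 0)
        = (m.choose k : ℝ) + (-1:ℝ)^k * (m.choose k : ℝ) := by
      intro k _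
      rcases Nat.even_or_odd k with h | h
      · rw [if_pos h, h.neg_one_pow]; ring
      · rw [if_neg (Nat.not_even_iff_odd.mpr h), h.neg_one_pow]; ring
    rw [Finset.sum_congr rfl this, Finset.sum_add_distrib, hfull, halt, add_zero]
  have : (2:ℝ) * 2^(m-1) = 2^m := by
    rw [← pow_succ']; congr 1; omega
  linarith

private lemma choose_div (n k : ℕ) (hk : k ≤ n) :
    (n.choose k : ℝ) / ((n - k : ℕ) + 1 : ℝ) = ((n+1).choose k : ℝ) / (n + 1 : ℝ) := by
  have e : (n + 1) * n.choose k = (n+1).choose k * (n - k + 1) := by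
    have h1 := Nat.add_one_mul_choose_eq n (n - k)
    rw [Nat.choose_symm hk] at h1
    have h2 : n - k + 1 = (n + 1) - k := by omega
    have h3 : (n+1).choose (n - k + 1) = (n+1).choose k := by
      rw [h2]; exact Nat.choose_symm (by omega)
    rw [← h3]
    exact h1
  have e' : ((n:ℝ) + 1) * (n.choose k : ℝ) = ((n+1).choose k : ℝ) * (((n-k:ℕ):ℝ) + 1) := by
    exact_mod_cast congrArg (Nat.cast : ℕ → ℝ) e
  rw [div_eq_div_iff (by positivity) (by positivity)]
  linarith [e']

private lemma key_sum (n : ℕ) (hn : Even n) (h2 : 2 ≤ n) :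
    ∑ k ∈ Finset.range (n + 1),
      (if Even k ∧ 2 ≤ k then (n.choose k : ℝ) / ((n - k : ℕ) + 1 : ℝ) else 0)
    = (2 ^ n - 1) / (n + 1 : ℝ) := by
  have step1 : ∀ k ∈ Finset.range (n + 1),
      (if Even k ∧ 2 ≤ k then (n.choose k : ℝ) / ((n - k : ℕ) + 1 : ℝ) else 0)
      = (if Even k ∧ 2 ≤ k then ((n+1).choose k : ℝ) else 0) / (n + 1 : ℝ) := by
    intro k hk
    rw [Finset.mem_range] at hk
    split_ifs with h
    · exact choose_div n k (by omega)
    · simp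
  rw [Finset.sum_congr rfl step1, ← Finset.sum_div]
  congr 1
  have hext : ∑ k ∈ Finset.range (n + 2),
      (if Even k ∧ 2 ≤ k then ((n+1).choose k : ℝ) else 0)
      = ∑ k ∈ Finset.range (n + 1),
      (if Even k ∧ 2 ≤ k then ((n+1).choose k : ℝ) else 0) := by
    rw [Finset.sum_range_succ, if_neg, add_zero]
    rintro ⟨he, -⟩
    exact (Nat.even_add_one.mp he) hn
  rw [← hext]
  have hsplit : ∀ k ∈ Finset.range (n + 2),
      (if Even k ∧ 2 ≤ k then ((n+1).choose k : ℝ) else 0)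
      = (if Even k then ((n+1).choose k : ℝ) else 0) - (if k = 0 then (1:ℝ) else 0) := by
    intro k _
    rcases Nat.lt_or_ge k 2 with h | h
    · interval_cases k <;> simp
    · rw [if_neg (show ¬ (k = 0) by omega)]
      by_cases he : Even k
      · rw [if_pos ⟨he, h⟩, if_pos he]; ring
      · rw [if_neg (fun hc => he hc.1), if_neg he]; ring
  rw [Finset.sum_congr rfl hsplit, Finset.sum_sub_distrib,
    even_choose_sum (n+1) (by omega),
    Finset.sum_ite_eq' (Finset.range (n+2)) 0 (fun _ => (1:ℝ)),
    if_pos (Finset.mem_range.mpr (by omega))]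
  simp

/-- If `a 0 = 1`, `a n = 0` for odd `n`, and for even `n ≥ 2`
`a n (1 − 2⁻ⁿ) = 2⁻ⁿ ∑_{k=2,4,…,n} C(n,k) a (n−k)`, then `a n = 1/(n+1)`
for all even `n`. -/
theorem recursion_solution (a : ℕ → ℝ)
    (h0 : a 0 = 1)
    (hodd : ∀ n, Odd n → a n = 0)
    (hrec : ∀ n, Even n → 2 ≤ n →
      a n * (1 - ((2:ℝ) ^ n)⁻¹)
        = ((2:ℝ) ^ n)⁻¹ * ∑ k ∈ Finset.range (n + 1),
            if Even k ∧ 2 ≤ k then (n.choose k : ℝ) * a (n - k) else 0) :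
    ∀ n, Even n → a n = 1 / (n + 1 : ℝ) := by
  intro n
  induction n using Nat.strong_induction_on with
  | _ n ih =>
    intro hn
    rcases Nat.eq_zero_or_pos n with rfl | hpos
    · simpa using h0
    have h2 : 2 ≤ n := by
      obtain ⟨r, rfl⟩ := hn; omega
    have hrw : ∀ k ∈ Finset.range (n + 1),
        (if Even k ∧ 2 ≤ k then (n.choose k : ℝ) * a (n - k) else 0)
        = (if Even k ∧ 2 ≤ k then (n.choose k : ℝ) / ((n - k : ℕ) + 1 : ℝ) else 0) := by
      intro k hk
      rw [Finset.mem_range] at hk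
      split_ifs with h
      · rw [ih (n - k) (by omega) ((Nat.even_sub (show k ≤ n by omega)).mpr ⟨fun _ => h.1, fun _ => hn⟩), mul_one_div]
      · rfl
    have heq := hrec n hn h2
    rw [Finset.sum_congr rfl hrw, key_sum n hn h2] at heq
    have hp : ((2:ℝ))^n ≠ 0 := by positivity
    have hn1 : ((n:ℝ) + 1) ≠ 0 := by positivity
    have hd : ((2:ℝ))^n - 1 ≠ 0 := by
      have : (4:ℝ) ≤ 2^n := by
        calc (4:ℝ) = 2^2 := by norm_num
        _ ≤ 2^n := pow_le_pow_right₀ one_le_two h2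
      linarith
    have key : a n * ((2^n - 1)/2^n) = (1/((n:ℝ)+1)) * ((2^n - 1)/2^n) := by
      have e1 : (1 - ((2:ℝ)^n)⁻¹) = (2^n - 1)/2^n := by field_simp
      rw [e1] at heq
      rw [heq]
      have habs : ∀ x y z : ℝ, x⁻¹ * (y / z) = (1/z) * (y / x) := by intros; ring
      exact habs _ _ _
    exact mul_right_cancel₀ (div_ne_zero hd hp) key
end
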